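/- Total expected regret bound for UCB in MDPs: under the hypotheses of the regret decomposition and the UCB count bound, with Tₖ = T₀ + c·k and c > 0, the expected regret after n iterations satisfies E[r(n)] ≤ Σ_{e ≠ e*} (32 log n/(Δₑ − 2Kₑ/Tₙ)² + 1 + π²/3)·(Δₑ + Kₑ/T₀) + (K_{e*}/c)·log((T₀ + cn − c)/T₀) + K_{e*}/T₀, hence E[r(n)] = O(log n). -/

import Mathlib

open MeasureTheory Finset

/-!
The regret of iteration `m` splits as `(R̄* − R̄(eₘ)) + (R̄(eₘ) − Xₘ)`, and by the tower property
the second part has expectation at most `E[K(eₘ)/Tₘ]`. Grouping the iterations by the expert played,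
each play of a suboptimal expert `e` costs at most `Δₑ + Kₑ/T₀`, so its total cost is controlled by
the UCB count bound, while the optimal expert costs at most `K_{e*} Σₘ 1/Tₘ`. For `Tₘ = T₀ + cm`
this harmonic sum is compared with a logarithm through `1 − 1/x ≤ log x`.
-/

lemma sub_div_le_log_sub_log {a b : ℝ} (ha : 0 < a) (hab : a ≤ b) :
    (b - a) / b ≤ Real.log b - Real.log a := by
  have hb : 0 < b := ha.trans_le hab
  have h := Real.one_sub_inv_le_log_of_pos (div_pos hb ha)
  rwa [Real.log_div hb.ne' ha.ne', inv_div, one_sub_div hb.ne'] at h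

lemma sum_range_one_div_add_mul_le {T₀ c : ℝ} (hT₀ : 0 < T₀) (hc : 0 < c) {n : ℕ} (hn : 1 ≤ n) :
    ∑ k ∈ range n, 1 / (T₀ + c * k) ≤ 1 / c * Real.log ((T₀ + c * n - c) / T₀) + 1 / T₀ := by
  obtain ⟨p, rfl⟩ := Nat.exists_eq_add_of_le' hn
  set f : ℕ → ℝ := fun k => T₀ + c * k with hf
  have hpos : ∀ k, 0 < f k := fun k => by positivity
  have hstep : ∀ k, 1 / f (k + 1) ≤ 1 / c * (Real.log (f (k + 1)) - Real.log (f k)) := by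
    intro k
    have hlog := sub_div_le_log_sub_log (hpos k) (b := f (k + 1))
      (by simp only [hf]; push_cast; linarith)
    calc 1 / f (k + 1) = 1 / c * ((f (k + 1) - f k) / f (k + 1)) := by
          simp only [hf]; push_cast; field_simp; ring
      _ ≤ _ := by gcongr
  calc ∑ k ∈ range (p + 1), 1 / f k
      = ∑ k ∈ range p, 1 / f (k + 1) + 1 / T₀ := by simp [sum_range_succ', hf]
    _ ≤ ∑ k ∈ range p, 1 / c * (Real.log (f (k + 1)) - Real.log (f k)) + 1 / T₀ := by
        gcongr with k; exact hstep k
    _ = 1 / c * Real.log (f p / T₀) + 1 / T₀ := by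
        rw [← mul_sum, sum_range_sub (fun k => Real.log (f k)),
          Real.log_div (hpos p).ne' hT₀.ne']
        simp [hf]
    _ = 1 / c * Real.log ((T₀ + c * ↑(p + 1) - c) / T₀) + 1 / T₀ := by
        simp only [hf]; push_cast; ring_nf

lemma sum_gap_add_div_le {ι E : Type*} [Fintype E] [DecidableEq E] (s : Finset ι) (a : ι → E)
    (R K : E → ℝ) (hK : ∀ e, 0 ≤ K e) (estar : E) (T : ι → ℝ) {T₀ : ℝ} (hT₀ : 0 < T₀)
    (hT : ∀ i, T₀ ≤ T i) :
    ∑ i ∈ s, (R estar - R (a i) + K (a i) / T i) ≤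
      K estar * ∑ i ∈ s, 1 / T i +
        ∑ e ∈ univ.filter (fun e => e ≠ estar),
          ((s.filter (fun i => a i = e)).card : ℝ) * (R estar - R e + K e / T₀) := by
  rw [← sum_fiberwise s a, ← add_sum_erase _ _ (mem_univ estar), ← filter_ne']
  gcongr with e
  · calc ∑ i ∈ s with a i = estar, (R estar - R (a i) + K (a i) / T i)
        = ∑ i ∈ s with a i = estar, K estar * (1 / T i) := by
          refine sum_congr rfl fun i hi => ?_
          rw [(mem_filter.mp hi).2]
          ring
      _ ≤ ∑ i ∈ s, K estar * (1 / T i) :=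
          sum_le_sum_of_subset_of_nonneg (filter_subset _ _) fun i _ _ =>
            mul_nonneg (hK estar) (one_div_nonneg.mpr (hT₀.le.trans (hT i)))
      _ = K estar * ∑ i ∈ s, 1 / T i := by rw [mul_sum]
  · rw [← nsmul_eq_mul, ← sum_const]
    refine sum_le_sum fun i hi => ?_
    rw [(mem_filter.mp hi).2]
    gcongr
    exacts [hK e, hT i]

section Expectation

variable {Ω E : Type*} {m0 : MeasurableSpace Ω} {μ : Measure Ω}
  [MeasurableSpace E] [MeasurableSingletonClass E]

lemma integrable_comp_of_finite [IsFiniteMeasure μ] [Finite E] (f : E → ℝ) {g : Ω → E}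
    (hg : Measurable g) : Integrable (fun ω => f (g ω)) μ := by
  obtain ⟨C, hC⟩ := (Set.finite_range fun x => ‖f x‖).bddAbove
  exact .of_bound ((measurable_of_finite f).comp hg).aestronglyMeasurable C
    (ae_of_all _ fun ω => hC ⟨g ω, rfl⟩)

lemma integral_le_of_condExp_le {m : MeasurableSpace Ω} (hm : m ≤ m0) [SigmaFinite (μ.trim hm)]
    {f g : Ω → ℝ} (hg : Integrable g μ) (hfg : μ[f | m] ≤ᵐ[μ] g) : ∫ ω, f ω ∂μ ≤ ∫ ω, g ω ∂μ := by
  rw [← integral_condExp hm]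
  exact integral_mono_ae integrable_condExp hg hfg

lemma integral_regret_le_integral_sum_gap_add_div [IsFiniteMeasure μ] [Finite E]
    (𝓕 : Filtration ℕ m0) (R K : E → ℝ) (rstar : ℝ) (T : ℕ → ℝ) {e : ℕ → Ω → E}
    (he : ∀ m, Measurable (e m)) {X : ℕ → Ω → ℝ} (hX : ∀ m, Integrable (X m) μ)
    (hbias : ∀ m, μ[fun ω => R (e m ω) - X m ω | 𝓕 m] ≤ᵐ[μ] fun ω => K (e m ω) / T m) (n : ℕ) :
    ∫ ω, ((n : ℝ) * rstar - ∑ m ∈ range n, X m ω) ∂μ ≤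
      ∫ ω, ∑ m ∈ range n, (rstar - R (e m ω) + K (e m ω) / T m) ∂μ := by
  have hgap (m : ℕ) : Integrable (fun ω => rstar - R (e m ω)) μ :=
    integrable_comp_of_finite (fun x => rstar - R x) (he m)
  have hstep (m : ℕ) : ∫ ω, (rstar - X m ω) ∂μ ≤
      ∫ ω, (rstar - R (e m ω) + K (e m ω) / T m) ∂μ := by
    have hbias_int : Integrable (fun ω => K (e m ω) / T m) μ :=
      integrable_comp_of_finite (fun x => K x / T m) (he m)
    calc ∫ ω, (rstar - X m ω) ∂μ
        = ∫ ω, (rstar - R (e m ω) + (R (e m ω) - X m ω)) ∂μ := by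
          simp only [sub_add_sub_cancel]
      _ = ∫ ω, (rstar - R (e m ω)) ∂μ + ∫ ω, (R (e m ω) - X m ω) ∂μ :=
          integral_add (hgap m) ((integrable_comp_of_finite R (he m)).sub (hX m))
      _ ≤ ∫ ω, (rstar - R (e m ω)) ∂μ + ∫ ω, K (e m ω) / T m ∂μ := by
          gcongr 1
          exact integral_le_of_condExp_le (𝓕.le m) hbias_int (hbias m)
      _ = _ := (integral_add (hgap m) hbias_int).symm
  calc ∫ ω, ((n : ℝ) * rstar - ∑ m ∈ range n, X m ω) ∂μ
      = ∫ ω, ∑ m ∈ range n, (rstar - X m ω) ∂μ := by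
        simp [sum_sub_distrib]
    _ = ∑ m ∈ range n, ∫ ω, (rstar - X m ω) ∂μ :=
        integral_finsetSum _ fun m _ => (integrable_const rstar).sub (hX m)
    _ ≤ ∑ m ∈ range n, ∫ ω, (rstar - R (e m ω) + K (e m ω) / T m) ∂μ :=
        sum_le_sum fun m _ => hstep m
    _ = _ := (integral_finsetSum _ fun m _ =>
        (hgap m).add (integrable_comp_of_finite (fun x => K x / T m) (he m))).symm

lemma integral_sum_gap_add_div_le [IsProbabilityMeasure μ] [Fintype E] [DecidableEq E] {ι : Type*}
    (s : Finset ι) {e : ι → Ω → E} (he : ∀ i, Measurable (e i)) (R K : E → ℝ) (hK : ∀ e, 0 ≤ K e)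
    (estar : E) (T : ι → ℝ) {T₀ : ℝ} (hT₀ : 0 < T₀) (hT : ∀ i, T₀ ≤ T i) :
    ∫ ω, ∑ i ∈ s, (R estar - R (e i ω) + K (e i ω) / T i) ∂μ ≤
      K estar * ∑ i ∈ s, 1 / T i +
        ∑ e' ∈ univ.filter (fun e' => e' ≠ estar),
          (∫ ω, ((s.filter (fun i => e i ω = e')).card : ℝ) ∂μ) * (R estar - R e' + K e' / T₀) := by
  have hcount (e' : E) : Integrable (fun ω => ((s.filter (fun i => e i ω = e')).card : ℝ)) μ := by
    simp only [natCast_card_filter]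
    exact integrable_finsetSum _ fun i _ =>
      integrable_comp_of_finite (fun x => if x = e' then (1 : ℝ) else 0) (he i)
  have hweighted : Integrable (fun ω => ∑ e' ∈ univ.filter (fun e' => e' ≠ estar),
      ((s.filter (fun i => e i ω = e')).card : ℝ) * (R estar - R e' + K e' / T₀)) μ :=
    integrable_finsetSum _ fun e' _ => (hcount e').mul_const _
  calc ∫ ω, ∑ i ∈ s, (R estar - R (e i ω) + K (e i ω) / T i) ∂μ
      ≤ ∫ ω, (K estar * ∑ i ∈ s, 1 / T i +
          ∑ e' ∈ univ.filter (fun e' => e' ≠ estar),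
            ((s.filter (fun i => e i ω = e')).card : ℝ) * (R estar - R e' + K e' / T₀)) ∂μ :=
        integral_mono
          (integrable_finsetSum _ fun i _ =>
            integrable_comp_of_finite (fun x => R estar - R x + K x / T i) (he i))
          ((integrable_const _).add hweighted)
          fun ω => sum_gap_add_div_le s (e · ω) R K hK estar T hT₀ hT
    _ = _ := by
        rw [integral_add (integrable_const _) hweighted, integral_const,
          integral_finsetSum _ fun e' _ => (hcount e').mul_const _]
        simp only [probReal_univ, one_smul, integral_mul_const]

end Expectation

theorem stmt_19_general {Ω : Type*} {m0 : MeasurableSpace Ω} {μ : Measure Ω}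
    [IsProbabilityMeasure μ]
    {E : Type*} [Fintype E] [DecidableEq E]
    [MeasurableSpace E] [MeasurableSingletonClass E]
    (𝓕 : Filtration ℕ m0)
    (Rbar K : E → ℝ) (hK : ∀ e', 0 ≤ K e')
    (estar : E) (hstar : ∀ e', Rbar e' ≤ Rbar estar)
    (T₀ c : ℝ) (hT₀ : 1 ≤ T₀) (hc : 0 < c)
    (T : ℕ → ℝ) (hTdef : ∀ k, T k = T₀ + c * k)
    (e : ℕ → Ω → E) (he : ∀ m, Measurable[𝓕 m] (e m))
    (X : ℕ → Ω → ℝ) (hXmeas : ∀ m, StronglyMeasurable[𝓕 (m + 1)] (X m))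
    (hX01 : ∀ m, ∀ᵐ ω ∂μ, X m ω ∈ Set.Icc (0 : ℝ) 1)
    (hbias : ∀ m, ∀ᵐ ω ∂μ,
      (μ[fun ω' => Rbar (e m ω') - X m ω' | 𝓕 m]) ω ≤ K (e m ω) / T m)
    (n : ℕ) (hn : 1 ≤ n)
    (hcount : ∀ e', e' ≠ estar →
      (∫ ω, (((Finset.range n).filter (fun m => e m ω = e')).card : ℝ) ∂μ) ≤
        32 * Real.log n / ((Rbar estar - Rbar e') - 2 * K e' / T n) ^ 2 +
          1 + Real.pi ^ 2 / 3) :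
    (∫ ω, ((n : ℝ) * Rbar estar - ∑ m ∈ Finset.range n, X m ω) ∂μ) ≤
      (∑ e' ∈ Finset.univ.filter (fun e' => e' ≠ estar),
        (32 * Real.log n / ((Rbar estar - Rbar e') - 2 * K e' / T n) ^ 2 +
            1 + Real.pi ^ 2 / 3) *
          ((Rbar estar - Rbar e') + K e' / T₀)) +
      (K estar / c) * Real.log ((T₀ + c * n - c) / T₀) + K estar / T₀ := by
  have hT₀pos : 0 < T₀ := one_pos.trans_le hT₀
  have hT (m : ℕ) : T₀ ≤ T m := by rw [hTdef]; exact le_add_of_nonneg_right (by positivity)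
  have he_meas (m : ℕ) : Measurable (e m) := (he m).mono (𝓕.le m) le_rfl
  have hX (m : ℕ) : Integrable (X m) μ :=
    .of_mem_Icc 0 1 ((hXmeas m).mono (𝓕.le _)).measurable.aemeasurable (hX01 m)
  have hharmonic : K estar * ∑ m ∈ range n, 1 / T m ≤
      K estar / c * Real.log ((T₀ + c * n - c) / T₀) + K estar / T₀ := by
    calc K estar * ∑ m ∈ range n, 1 / T m
        ≤ K estar * (1 / c * Real.log ((T₀ + c * n - c) / T₀) + 1 / T₀) := by
          simp only [hTdef]
          exact mul_le_mul_of_nonneg_left (sum_range_one_div_add_mul_le hT₀pos hc hn) (hK estar)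
      _ = _ := by ring
  have hcounts := sum_le_sum fun e' (hmem : e' ∈ univ.filter (fun e' => e' ≠ estar)) =>
    mul_le_mul_of_nonneg_right (hcount e' (mem_filter.mp hmem).2)
      (add_nonneg (sub_nonneg.mpr (hstar e')) (div_nonneg (hK e') hT₀pos.le))
  calc ∫ ω, ((n : ℝ) * Rbar estar - ∑ m ∈ range n, X m ω) ∂μ
      ≤ ∫ ω, ∑ m ∈ range n, (Rbar estar - Rbar (e m ω) + K (e m ω) / T m) ∂μ :=
        integral_regret_le_integral_sum_gap_add_div 𝓕 Rbar K (Rbar estar) T he_meas hX hbias n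
    _ ≤ _ := integral_sum_gap_add_div_le (range n) he_meas Rbar K hK estar T hT₀pos hT
    _ ≤ _ := by linarith

/-- Total expected regret bound for UCB in MDPs: combining the regret
decomposition, the UCB count bound `E[Tₑ(n)] ≤ 32 log n/(Δₑ − 2Kₑ/Tₙ)² + 1 + π²/3`,
and the harmonic-sum bound for linearly growing horizons `Tₖ = T₀ + c·k`,
the expected regret after `n` iterations is `O(log n)`. -/
theorem stmt_19 {Ω : Type*} {m0 : MeasurableSpace Ω} {μ : Measure Ω}
    [IsProbabilityMeasure μ]
    {E : Type*} [Fintype E] [DecidableEq E]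
    [MeasurableSpace E] [MeasurableSingletonClass E]
    (𝓕 : Filtration ℕ m0)
    (Rbar K : E → ℝ) (hK : ∀ e', 0 ≤ K e')
    (estar : E) (hstar : ∀ e', Rbar e' ≤ Rbar estar)
    (T₀ c : ℝ) (hT₀ : 1 ≤ T₀) (hc : 0 < c)
    (T : ℕ → ℝ) (hTdef : ∀ k, T k = T₀ + c * k)
    (e : ℕ → Ω → E) (he : ∀ m, Measurable[𝓕 m] (e m))
    (X : ℕ → Ω → ℝ) (hXmeas : ∀ m, StronglyMeasurable[𝓕 (m + 1)] (X m))
    (hX01 : ∀ m, ∀ᵐ ω ∂μ, X m ω ∈ Set.Icc (0 : ℝ) 1)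
    (hbias : ∀ m, ∀ᵐ ω ∂μ,
      (μ[fun ω' => Rbar (e m ω') - X m ω' | 𝓕 m]) ω ≤ K (e m ω) / T m)
    (n : ℕ) (hn : 1 ≤ n)
    (hgap : ∀ e', e' ≠ estar → Rbar estar - Rbar e' > 2 * K e' / T₀)
    (hcount : ∀ e', e' ≠ estar →
      (∫ ω, (((Finset.range n).filter (fun m => e m ω = e')).card : ℝ) ∂μ) ≤
        32 * Real.log n / ((Rbar estar - Rbar e') - 2 * K e' / T n) ^ 2 +
          1 + Real.pi ^ 2 / 3) :
    (∫ ω, ((n : ℝ) * Rbar estar - ∑ m ∈ Finset.range n, X m ω) ∂μ) ≤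
      (∑ e' ∈ Finset.univ.filter (fun e' => e' ≠ estar),
        (32 * Real.log n / ((Rbar estar - Rbar e') - 2 * K e' / T n) ^ 2 +
            1 + Real.pi ^ 2 / 3) *
          ((Rbar estar - Rbar e') + K e' / T₀)) +
      (K estar / c) * Real.log ((T₀ + c * n - c) / T₀) + K estar / T₀ :=
  stmt_19_general 𝓕 Rbar K hK estar hstar T₀ c hT₀ hc T hTdef e he X hXmeas hX01 hbias n hn hcount
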